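/- arXiv:2504.04856 — 2 statements merged into one kernel-verified Lean document; each statement's English description precedes it below -/
import Mathlib

section
/- Let A and B be nonempty finite types and let K be a Hermitian complex matrix indexed by A × B. Then the following are equivalent: (i) for every Hermitian positive semidefinite matrix C indexed by A × B such that Tr_B(C) = r • 1 for some real r, one has Re Tr(K·C) ≥ 0; (ii) there exist a Hermitian positive semidefinite matrix ω indexed by A × B and a Hermitian matrix A' indexed by A with Tr(A') = 0 such that K = ω + A' ⊗ₖ 1. -/
open Matrix
open scoped Kronecker ComplexOrder

noncomputable def jordan {n : Type*} [Fintype n] (X Y : Matrix n n ℂ) : Matrix n n ℂ :=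
  (2 : ℂ)⁻¹ • (X * Y + Y * X)

noncomputable def trB {A B : Type*} [Fintype B] (M : Matrix (A × B) (A × B) ℂ) : Matrix A A ℂ :=
  Matrix.of fun i j => ∑ k, M (i, k) (j, k)

noncomputable def trA {A B : Type*} [Fintype A] (M : Matrix (A × B) (A × B) ℂ) : Matrix B B ℂ :=
  Matrix.of fun k l => ∑ i, M (i, k) (i, l)

def ptA {A B : Type*} (M : Matrix (A × B) (A × B) ℂ) : Matrix (A × B) (A × B) ℂ :=
  Matrix.of fun p q => M (q.1, p.2) (p.1, q.2)

def swap (A : Type*) [DecidableEq A] : Matrix (A × A) (A × A) ℂ :=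
  Matrix.of fun p q => if p.1 = q.2 ∧ p.2 = q.1 then 1 else 0

def IsState {A : Type*} [Fintype A] (ρ : Matrix A A ℂ) : Prop :=
  ρ.PosSemidef ∧ ρ.trace = 1

def IsJam {A B : Type*} [Fintype A] [Fintype B] [DecidableEq A]
    (J : Matrix (A × B) (A × B) ℂ) : Prop :=
  (ptA J).PosSemidef ∧ trB J = 1

noncomputable def cost {A B : Type*} [Fintype A] [Fintype B] [DecidableEq A] [DecidableEq B]
    (K : Matrix (A × B) (A × B) ℂ) (ρ : Matrix A A ℂ) (σ : Matrix B B ℂ) : ℝ :=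
  sInf { r : ℝ | ∃ J : Matrix (A × B) (A × B) ℂ, IsJam J ∧
      trA ((ρ ⊗ₖ (1 : Matrix B B ℂ)) * J) = σ ∧
      r = (Matrix.trace (K * jordan (ρ ⊗ₖ (1 : Matrix B B ℂ)) J)).re }

/-!
The cone `PSD + {X ⊗ₖ 1 | X Hermitian, tr X = 0}` is closed: the trace of `ω + X ⊗ₖ 1` only sees
the positive part `ω`, and a positive semidefinite matrix is bounded in Frobenius norm by its
trace, so a compactness argument applies. If `K` is outside this cone, Hahn–Banach gives a real
functional that is nonnegative on the cone and negative at `K`; on Hermitian matrices it is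
`M ↦ Re tr (M H)` for a Hermitian `H`. Nonnegativity on positive matrices makes `H` positive
semidefinite, and vanishing on the subspace `X ⊗ₖ 1` makes `Tr_B H` orthogonal to every traceless
Hermitian matrix, hence scalar. So `H` is an admissible `C` with `Re tr (K H) < 0`. The converse
is the identity `tr ((X ⊗ₖ 1) C) = tr (X Tr_B C)`.
-/

open scoped MatrixOrder Pointwise

attribute [local instance] Matrix.frobeniusNormedAddCommGroup Matrix.frobeniusNormedSpace

theorem isClosed_add_of_norm_le_of_eq_zero {E : Type*} [NormedAddCommGroup E] [NormedSpace ℝ E]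
    [ProperSpace E] {K L : Set E} (hK : IsClosed K) (hL : IsClosed L) (φ : StrongDual ℝ E)
    (hKφ : ∀ k ∈ K, ‖k‖ ≤ φ k) (hLφ : ∀ l ∈ L, φ l = 0) : IsClosed (K + L) := by
  refine isClosed_of_closure_subset fun x hx => ?_
  set r := ‖x‖ + 1
  set T := (K ∩ Metric.closedBall 0 (‖φ‖ * r)) + (L ∩ Metric.closedBall 0 (‖φ‖ * r + r))
  have hT : IsClosed T := (((isCompact_closedBall _ _).inter_left hK).add
    ((isCompact_closedBall _ _).inter_left hL)).isClosed
  have hnear : ∀ y ∈ K + L, y ∈ Metric.ball x 1 → y ∈ T := by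
    rintro _ ⟨k, hk, l, hl, rfl⟩ hkl
    have hsum : ‖k + l‖ ≤ r := by
      have := norm_le_norm_add_norm_sub' (k + l) x
      rw [Metric.mem_ball, dist_eq_norm] at hkl
      linarith
    have hk' : ‖k‖ ≤ ‖φ‖ * r := calc
      ‖k‖ ≤ φ k := hKφ k hk
      _ = φ (k + l) := by rw [map_add, hLφ l hl, add_zero]
      _ ≤ ‖φ‖ * ‖k + l‖ := (le_abs_self _).trans (φ.le_opNorm _)
      _ ≤ ‖φ‖ * r := mul_le_mul_of_nonneg_left hsum (norm_nonneg _)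
    have hl' : ‖l‖ ≤ ‖φ‖ * r + r := calc
      ‖l‖ = ‖(k + l) - k‖ := by rw [add_sub_cancel_left]
      _ ≤ ‖k + l‖ + ‖k‖ := norm_sub_le _ _
      _ ≤ ‖φ‖ * r + r := by linarith
    exact Set.add_mem_add ⟨hk, mem_closedBall_zero_iff.mpr hk'⟩
      ⟨hl, mem_closedBall_zero_iff.mpr hl'⟩
  have hcover : K + L ⊆ T ∪ (Metric.ball x 1)ᶜ := fun y hy =>
    (em (y ∈ Metric.ball x 1)).imp (hnear y hy) id
  have hxT := ((hT.union Metric.isOpen_ball.isClosed_compl).closure_subset_iff.mpr hcover hx)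
  exact Set.add_subset_add Set.inter_subset_left Set.inter_subset_left (hxT.resolve_right (by simp))

namespace Matrix

variable {𝕜 m n : Type*} [RCLike 𝕜] [Fintype m] [Fintype n]

theorem PosSemidef.exists_eq_conjTranspose_mul_self [DecidableEq n] {A : Matrix n n 𝕜}
    (hA : A.PosSemidef) : ∃ B : Matrix n n 𝕜, A = Bᴴ * B := by
  obtain ⟨B, hB, -, rfl⟩ := CFC.exists_sqrt_of_isSelfAdjoint_of_quasispectrumRestricts
    hA.isHermitian.isSelfAdjoint (QuasispectrumRestricts.nnreal_of_nonneg hA.nonneg)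
  exact ⟨B, by rw [← star_eq_conjTranspose, hB.star_eq]⟩

theorem PosSemidef.trace_mul_nonneg [DecidableEq n] {A C : Matrix n n 𝕜} (hA : A.PosSemidef)
    (hC : C.PosSemidef) : 0 ≤ (A * C).trace := by
  obtain ⟨B, rfl⟩ := hA.exists_eq_conjTranspose_mul_self
  rw [Matrix.mul_assoc, trace_mul_comm]
  exact (hC.mul_mul_conjTranspose_same B).trace_nonneg

theorem frobenius_norm_sq_eq_re_trace (A : Matrix m n 𝕜) :
    ‖A‖ ^ 2 = RCLike.re (Aᴴ * A).trace := by
  rw [frobenius_norm_def, ← Real.sqrt_eq_rpow, Real.sq_sqrt (by positivity), Finset.sum_comm]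
  simp only [trace, diag_apply, mul_apply, conjTranspose_apply, map_sum, RCLike.star_def,
    RCLike.conj_mul, ← RCLike.ofReal_pow, RCLike.ofReal_re, Real.rpow_two]

theorem PosSemidef.frobenius_norm_le_re_trace [DecidableEq n] {A : Matrix n n 𝕜}
    (hA : A.PosSemidef) : ‖A‖ ≤ RCLike.re A.trace := by
  obtain ⟨B, rfl⟩ := hA.exists_eq_conjTranspose_mul_self
  calc ‖Bᴴ * B‖ ≤ ‖Bᴴ‖ * ‖B‖ := frobenius_norm_mul _ _
    _ = RCLike.re (Bᴴ * B).trace := by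
      rw [frobenius_norm_conjTranspose, ← sq, frobenius_norm_sq_eq_re_trace]

theorem isClosed_setOf_posSemidef : IsClosed {A : Matrix n n 𝕜 | A.PosSemidef} := by
  have hHerm : IsClosed {A : Matrix n n 𝕜 | A.IsHermitian} :=
    isClosed_eq continuous_id.matrix_conjTranspose continuous_id
  have hform (x : n → 𝕜) : IsClosed {A : Matrix n n 𝕜 | 0 ≤ star x ⬝ᵥ A *ᵥ x} :=
    isClosed_Ici.preimage <|
      continuous_const.dotProduct (continuous_id.matrix_mulVec continuous_const)
  simpa only [posSemidef_iff_dotProduct_mulVec, Set.ofPred_and, Set.ofPred_forall]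
    using hHerm.inter (isClosed_iInter hform)

open RCLike in
theorem exists_re_trace_mul_eq [DecidableEq m] [DecidableEq n] (f : Matrix m n 𝕜 →ₗ[ℝ] ℝ) :
    ∃ C : Matrix n m 𝕜, ∀ A, f A = re (C * A).trace := by
  set c : Matrix m n 𝕜 := of fun i j => (f (single i j 1) : 𝕜) - f (single i j I) * I
  have hsingle (i : m) (j : n) (z : 𝕜) : f (single i j z) = re (c i j * z) := by
    have hz : single i j z = re z • single i j 1 + im z • single i j I := by
      rw [smul_single, smul_single, ← single_add, real_smul_eq_coe_mul, real_smul_eq_coe_mul,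
        mul_one, re_add_im]
    simp only [hz, map_add, map_smul, smul_eq_mul, c, of_apply, sub_mul, map_sub,
      re_ofReal_mul, mul_assoc, I_mul_re]
    ring
  refine ⟨cᵀ, fun A => ?_⟩
  conv_lhs => rw [matrix_eq_sum_single A]
  simp only [map_sum, hsingle, trace, diag_apply, mul_apply, transpose_apply]
  exact Finset.sum_comm

open RCLike in
theorem exists_isHermitian_re_trace_mul_eq [DecidableEq n] (f : Matrix n n 𝕜 →ₗ[ℝ] ℝ) :
    ∃ H : Matrix n n 𝕜, H.IsHermitian ∧ ∀ A, A.IsHermitian → f A = re (H * A).trace := by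
  obtain ⟨C, hC⟩ := exists_re_trace_mul_eq f
  refine ⟨(2⁻¹ : ℝ) • (C + Cᴴ), (isHermitian_add_transpose_self C).smul (.all _), fun A hA => ?_⟩
  have hadj : re (Cᴴ * A).trace = re (C * A).trace := by
    rw [← hA.eq, ← conjTranspose_mul, trace_conjTranspose, star_def, conj_re, trace_mul_comm,
      hA.eq]
  rw [smul_mul, trace_smul, smul_re, add_mul, trace_add, map_add, hadj, hC]
  ring

open RCLike in
theorem IsHermitian.posSemidef_of_re_trace_mul_nonneg {H : Matrix n n 𝕜} (hH : H.IsHermitian)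
    (h : ∀ A : Matrix n n 𝕜, A.PosSemidef → 0 ≤ re (H * A).trace) : H.PosSemidef := by
  refine PosSemidef.of_dotProduct_mulVec_nonneg hH fun x => nonneg_iff.mpr ⟨?_, ?_⟩
  · simpa [mul_vecMulVec, trace_vecMulVec, dotProduct_comm] using
      h _ (posSemidef_vecMulVec_self_star x)
  · exact hH.im_star_dotProduct_mulVec_self x

open RCLike in
theorem IsHermitian.exists_eq_smul_one_of_re_trace_mul_eq_zero [DecidableEq n]
    {N : Matrix n n 𝕜} (hN : N.IsHermitian)
    (h : ∀ X : Matrix n n 𝕜, X.IsHermitian → X.trace = 0 → re (X * N).trace = 0) :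
    ∃ r : ℝ, N = r • 1 := by
  rcases isEmpty_or_nonempty n with hn | hn
  · exact ⟨0, Subsingleton.elim _ _⟩
  set r : ℝ := re N.trace / Fintype.card n
  set X := N - r • (1 : Matrix n n 𝕜)
  have hX : X.IsHermitian := hN.sub (isHermitian_one.smul (.all r))
  have hXtrace : X.trace = 0 := by
    have him : im N.trace = 0 := conj_eq_iff_im.mp <| by
      rw [← star_def, ← trace_conjTranspose, hN.eq]
    refine RCLike.ext ?_ (by simp [X, him, trace_sub, trace_smul, smul_im])
    simp [X, r, trace_sub, trace_smul, smul_re]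
  have hXX : re (Xᴴ * X).trace = 0 := by
    have hXN : X * N = X * X + r • X := by
      rw [show N = X + r • (1 : Matrix n n 𝕜) by simp [X], Matrix.mul_add, Matrix.mul_smul,
        Matrix.mul_one]
    rw [hX.eq, ← h X hX hXtrace, hXN, trace_add, trace_smul, hXtrace, smul_zero, add_zero]
  refine ⟨r, sub_eq_zero.mp (norm_eq_zero.mp ?_)⟩
  rw [← sq_eq_zero_iff (M₀ := ℝ), frobenius_norm_sq_eq_re_trace, hXX]

end Matrix

-- The Frobenius norm induces the product topology on matrices.
instance Matrix.instLocallyConvexSpaceReal {m n : Type*} [Fintype m] [Fintype n] :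
    LocallyConvexSpace ℝ (Matrix m n ℂ) :=
  NormedSpace.toLocallyConvexSpace

theorem trace_kronecker_one_mul {A B : Type*} [Fintype A] [Fintype B] [DecidableEq B]
    (X : Matrix A A ℂ) (M : Matrix (A × B) (A × B) ℂ) :
    ((X ⊗ₖ (1 : Matrix B B ℂ)) * M).trace = (X * trB M).trace := by
  simp only [Matrix.trace, Matrix.mul_apply, Matrix.diag_apply, kroneckerMap_apply,
    Matrix.one_apply, trB, Matrix.of_apply, Fintype.sum_prod_type, mul_ite, mul_one, mul_zero,
    ite_mul, zero_mul, Finset.sum_ite_eq, Finset.mem_univ, if_true, Finset.mul_sum]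
  exact Finset.sum_congr rfl fun _ _ => Finset.sum_comm

theorem isHermitian_trB {A B : Type*} [Fintype B] {M : Matrix (A × B) (A × B) ℂ}
    (hM : M.IsHermitian) : (trB M).IsHermitian := by
  ext i j
  simp only [conjTranspose_apply, trB, of_apply, star_sum, hM.apply]

noncomputable def tracelessKroneckerOne (A B : Type*) [Fintype A] [DecidableEq B] :
    Submodule ℝ (Matrix (A × B) (A × B) ℂ) :=
  (selfAdjoint.submodule ℝ (Matrix A A ℂ) ⊓ LinearMap.ker (traceLinearMap A ℝ ℂ)).map
    ((kroneckerBilinear (R := ℝ)).flip (1 : Matrix B B ℂ))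

theorem mem_tracelessKroneckerOne {A B : Type*} [Fintype A] [DecidableEq B]
    {L : Matrix (A × B) (A × B) ℂ} : L ∈ tracelessKroneckerOne A B ↔
      ∃ X : Matrix A A ℂ, X.IsHermitian ∧ X.trace = 0 ∧ L = X ⊗ₖ (1 : Matrix B B ℂ) := by
  constructor
  · rintro ⟨X, ⟨hX, hX0⟩, rfl⟩
    exact ⟨X, hX, hX0, rfl⟩
  · rintro ⟨X, hX, hX0, rfl⟩
    exact ⟨X, ⟨hX, hX0⟩, rfl⟩

theorem isClosed_positive_add_tracelessKroneckerOne (A B : Type*) [Fintype A] [Fintype B]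
    [DecidableEq A] [DecidableEq B] :
    IsClosed ((PointedCone.positive ℝ (Matrix (A × B) (A × B) ℂ) : Set _) +
      (tracelessKroneckerOne A B : Set (Matrix (A × B) (A × B) ℂ))) := by
  have hpos : (PointedCone.positive ℝ (Matrix (A × B) (A × B) ℂ) : Set _) =
      {M : Matrix (A × B) (A × B) ℂ | M.PosSemidef} := Set.ext fun _ => nonneg_iff_posSemidef
  refine isClosed_add_of_norm_le_of_eq_zero (hpos ▸ isClosed_setOf_posSemidef)
    (Submodule.closed_of_finiteDimensional _)
    (LinearMap.toContinuousLinearMap (Complex.reLm ∘ₗ traceLinearMap _ ℝ ℂ)) ?_ ?_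
  · intro M hM
    exact (nonneg_iff_posSemidef.mp hM).frobenius_norm_le_re_trace
  · intro L hL
    obtain ⟨X, -, hX0, rfl⟩ := mem_tracelessKroneckerOne.mp hL
    simp [trace_kronecker, hX0]

noncomputable def dualChoiCone (A B : Type*) [Fintype A] [Fintype B] [DecidableEq A]
    [DecidableEq B] : ProperCone ℝ (Matrix (A × B) (A × B) ℂ) where
  toSubmodule := PointedCone.positive ℝ _ ⊔ tracelessKroneckerOne A B
  isClosed' := by
    rw [Submodule.carrier_eq_coe, Submodule.coe_sup]
    exact isClosed_positive_add_tracelessKroneckerOne A B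

section DualChoiCone

variable {A B : Type*} [Fintype A] [Fintype B] [DecidableEq A] [DecidableEq B]

theorem mem_dualChoiCone {K : Matrix (A × B) (A × B) ℂ} :
    K ∈ dualChoiCone A B ↔ ∃ (ω : Matrix (A × B) (A × B) ℂ) (X : Matrix A A ℂ),
      ω.PosSemidef ∧ X.IsHermitian ∧ X.trace = 0 ∧ K = ω + X ⊗ₖ (1 : Matrix B B ℂ) := by
  rw [dualChoiCone, ClosedSubmodule.mem_mk, Submodule.mem_sup]
  constructor
  · rintro ⟨ω, hω, L, hL, rfl⟩
    obtain ⟨X, hX, hX0, rfl⟩ := mem_tracelessKroneckerOne.mp hL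
    exact ⟨ω, X, nonneg_iff_posSemidef.mp hω, hX, hX0, rfl⟩
  · rintro ⟨ω, X, hω, hX, hX0, rfl⟩
    exact ⟨ω, hω.nonneg, _, mem_tracelessKroneckerOne.mpr ⟨X, hX, hX0, rfl⟩, rfl⟩

theorem isHermitian_of_mem_dualChoiCone {K : Matrix (A × B) (A × B) ℂ}
    (hK : K ∈ dualChoiCone A B) : K.IsHermitian := by
  obtain ⟨ω, X, hω, hX, -, rfl⟩ := mem_dualChoiCone.mp hK
  exact hω.isHermitian.add <| by
    rw [IsHermitian, conjTranspose_kronecker, hX.eq, conjTranspose_one]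

theorem re_trace_mul_nonneg_of_mem_dualChoiCone {K C : Matrix (A × B) (A × B) ℂ}
    (hK : K ∈ dualChoiCone A B) (hC : C.PosSemidef) {r : ℝ} (hr : trB C = r • 1) :
    0 ≤ (K * C).trace.re := by
  obtain ⟨ω, X, hω, -, hX0, rfl⟩ := mem_dualChoiCone.mp hK
  rw [Matrix.add_mul, trace_add, Complex.add_re, trace_kronecker_one_mul, hr, Matrix.mul_smul,
    Matrix.mul_one, trace_smul, hX0, smul_zero, Complex.zero_re, add_zero]
  exact (Complex.le_def.mp (hω.trace_mul_nonneg hC)).1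

open RCLike in
theorem exists_choi_of_nonneg_on_dualChoiCone (f : StrongDual ℝ (Matrix (A × B) (A × B) ℂ))
    (hf : ∀ K ∈ dualChoiCone A B, 0 ≤ f K) :
    ∃ H : Matrix (A × B) (A × B) ℂ, H.PosSemidef ∧ (∃ r : ℝ, trB H = r • 1) ∧
      ∀ K, K.IsHermitian → f K = (K * H).trace.re := by
  obtain ⟨H, hH, hfH⟩ := exists_isHermitian_re_trace_mul_eq f.toLinearMap
  have hfH' (K) (hK : K.IsHermitian) : f K = re (K * H).trace := by
    rw [trace_mul_comm]
    exact hfH K hK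
  have hHpsd : H.PosSemidef := hH.posSemidef_of_re_trace_mul_nonneg fun ω hω =>
    hfH ω hω.isHermitian ▸ hf ω (Submodule.mem_sup_left hω.nonneg)
  -- `f` vanishes on the subspace `tracelessKroneckerOne A B` of the cone, so `trB H` is
  -- orthogonal to all traceless Hermitian matrices
  refine ⟨H, hHpsd, (isHermitian_trB hH).exists_eq_smul_one_of_re_trace_mul_eq_zero
    fun X hX hX0 => ?_, hfH'⟩
  have hL : X ⊗ₖ (1 : Matrix B B ℂ) ∈ tracelessKroneckerOne A B :=
    mem_tracelessKroneckerOne.mpr ⟨X, hX, hX0, rfl⟩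
  have h₁ := hf _ (Submodule.mem_sup_right hL)
  have hL' : -(X ⊗ₖ (1 : Matrix B B ℂ)) ∈ tracelessKroneckerOne A B := neg_mem hL
  have h₂ := hf _ (Submodule.mem_sup_right hL')
  rw [map_neg] at h₂
  rw [← trace_kronecker_one_mul, ← hfH' _ (isHermitian_of_mem_dualChoiCone
    (Submodule.mem_sup_right hL))]
  linarith

end DualChoiCone

theorem stmt8_general {A B : Type*} [Fintype A] [Fintype B]
    [DecidableEq A] [DecidableEq B]
    (K : Matrix (A × B) (A × B) ℂ) (hK : K.IsHermitian) :
    (∀ C : Matrix (A × B) (A × B) ℂ, C.PosSemidef →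
        (∃ r : ℝ, trB C = r • (1 : Matrix A A ℂ)) →
        0 ≤ (Matrix.trace (K * C)).re) ↔
    (∃ (ω : Matrix (A × B) (A × B) ℂ) (A' : Matrix A A ℂ),
        ω.PosSemidef ∧ A'.IsHermitian ∧ A'.trace = 0 ∧
        K = ω + A' ⊗ₖ (1 : Matrix B B ℂ)) := by
  rw [← mem_dualChoiCone]
  refine ⟨fun h => ?_, fun hK' C hC ⟨r, hr⟩ => re_trace_mul_nonneg_of_mem_dualChoiCone hK' hC hr⟩
  by_contra hK'
  obtain ⟨f, hf, hfK⟩ := (dualChoiCone A B).hyperplane_separation_point hK'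
  obtain ⟨H, hH, hr, hfH⟩ := exists_choi_of_nonneg_on_dualChoiCone f hf
  linarith [h H hH hr, hfH K hK]

theorem stmt8 {A B : Type*} [Fintype A] [Fintype B] [Nonempty A] [Nonempty B]
    [DecidableEq A] [DecidableEq B]
    (K : Matrix (A × B) (A × B) ℂ) (hK : K.IsHermitian) :
    (∀ C : Matrix (A × B) (A × B) ℂ, C.PosSemidef →
        (∃ r : ℝ, trB C = r • (1 : Matrix A A ℂ)) →
        0 ≤ (Matrix.trace (K * C)).re) ↔
    (∃ (ω : Matrix (A × B) (A × B) ℂ) (A' : Matrix A A ℂ),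
        ω.PosSemidef ∧ A'.IsHermitian ∧ A'.trace = 0 ∧
        K = ω + A' ⊗ₖ (1 : Matrix B B ℂ)) :=
  stmt8_general K hK
end

section
/- Let A and B be nonempty finite types, K a Hermitian cost matrix indexed by (A×B)×(A×B), ρ a state on A, X a finite type, p : X → ℝ a probability distribution (p x ≥ 0, Σ_x p x = 1), and σ_x a state on B for each x. Then 𝒦_K(ρ, Σ_x p x • σ_x) ≤ Σ_x p x · 𝒦_K(ρ, σ_x). -/
/-! The cost `𝒦_K(ρ, ·)` is convex because the constraints on a transport plan `J` are affine
in `J` and the objective `Re Tr (K · ((ρ ⊗ 1) ★ J))` is linear in `J`: mixing near-optimal plans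
for the `σ x` with the weights `p x` gives a plan for `∑ x, p x • σ x`. The infimum defining the
cost is not the junk value of `sInf` because the feasible set is nonempty (`J = 1 ⊗ σ`) and
bounded below: `T_A(J)` is positive semidefinite of trace `|A|`, which bounds every entry
of `J` by `|A|`. -/

open Matrix
open scoped Kronecker ComplexOrder

section PartialTrace

variable {A B R ι : Type*}

@[simp]
lemma trA_sum [Fintype A] (s : Finset ι) (M : ι → Matrix (A × B) (A × B) ℂ) :
    trA (∑ x ∈ s, M x) = ∑ x ∈ s, trA (M x) := by
  ext k l
  simp only [trA, of_apply, Matrix.sum_apply]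
  exact Finset.sum_comm

@[simp]
lemma trA_smul [Fintype A] [DistribSMul R ℂ] (c : R) (M : Matrix (A × B) (A × B) ℂ) :
    trA (c • M) = c • trA M := by
  ext k l
  simp [trA, Finset.smul_sum]

@[simp]
lemma trB_sum [Fintype B] (s : Finset ι) (M : ι → Matrix (A × B) (A × B) ℂ) :
    trB (∑ x ∈ s, M x) = ∑ x ∈ s, trB (M x) := by
  ext i j
  simp only [trB, of_apply, Matrix.sum_apply]
  exact Finset.sum_comm

@[simp]
lemma trB_smul [Fintype B] [DistribSMul R ℂ] (c : R) (M : Matrix (A × B) (A × B) ℂ) :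
    trB (c • M) = c • trB M := by
  ext i j
  simp [trB, Finset.smul_sum]

@[simp]
lemma ptA_sum (s : Finset ι) (M : ι → Matrix (A × B) (A × B) ℂ) :
    ptA (∑ x ∈ s, M x) = ∑ x ∈ s, ptA (M x) := by
  ext p q
  simp [ptA, Matrix.sum_apply]

@[simp]
lemma ptA_smul [SMul R ℂ] (c : R) (M : Matrix (A × B) (A × B) ℂ) :
    ptA (c • M) = c • ptA M :=
  rfl

lemma trA_kronecker [Fintype A] (X : Matrix A A ℂ) (Y : Matrix B B ℂ) :
    trA (X ⊗ₖ Y) = X.trace • Y := by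
  ext k l
  simp [trA, trace, Finset.sum_mul]

lemma trB_kronecker [Fintype B] (X : Matrix A A ℂ) (Y : Matrix B B ℂ) :
    trB (X ⊗ₖ Y) = Y.trace • X := by
  ext i j
  simp [trB, trace, Finset.mul_sum, mul_comm]

lemma ptA_kronecker (X : Matrix A A ℂ) (Y : Matrix B B ℂ) : ptA (X ⊗ₖ Y) = Xᵀ ⊗ₖ Y :=
  rfl

lemma trace_ptA [Fintype A] [Fintype B] (M : Matrix (A × B) (A × B) ℂ) :
    (ptA M).trace = M.trace :=
  rfl

lemma trace_trB [Fintype A] [Fintype B] (M : Matrix (A × B) (A × B) ℂ) :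
    (trB M).trace = M.trace := by
  simp [trace, trB, Fintype.sum_prod_type]

end PartialTrace

lemma Matrix.PosSemidef.norm_apply_le_trace {n : Type*} [Fintype n] {M : Matrix n n ℂ}
    (hM : M.PosSemidef) (a b : n) : ‖M a b‖ ≤ M.trace.re := by
  classical
  obtain ⟨C, rfl⟩ : ∃ C : Matrix n n ℂ, M = Cᴴ * C := by
    open MatrixOrder in exact CStarAlgebra.nonneg_iff_eq_star_mul_self.mp hM.nonneg
  have diag_re (c : n) : ((Cᴴ * C) c c).re = ∑ d, ‖C d c‖ ^ 2 := by
    simp [mul_apply, Complex.re_sum, ← Complex.normSq_eq_norm_sq, Complex.normSq_apply]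
  have diag_le_trace (c : n) : ((Cᴴ * C) c c).re ≤ (Cᴴ * C).trace.re := by
    rw [trace, Complex.re_sum]
    exact Finset.single_le_sum (f := fun c => ((Cᴴ * C) c c).re)
      (fun c _ => (diag_re c).symm ▸ by positivity) (Finset.mem_univ c)
  calc ‖(Cᴴ * C) a b‖ ≤ ∑ d, ‖C d a‖ * ‖C d b‖ := by
        rw [mul_apply]
        exact (norm_sum_le _ _).trans_eq (by simp)
    _ ≤ ∑ d, (‖C d a‖ ^ 2 + ‖C d b‖ ^ 2) / 2 :=
        Finset.sum_le_sum fun d _ => by nlinarith [sq_nonneg (‖C d a‖ - ‖C d b‖)]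
    _ = (((Cᴴ * C) a a).re + ((Cᴴ * C) b b).re) / 2 := by
        rw [diag_re, diag_re, ← Finset.sum_add_distrib, Finset.sum_div]
    _ ≤ (Cᴴ * C).trace.re := by linarith [diag_le_trace a, diag_le_trace b]

section Jamiolkowski

variable {A B : Type*} [Fintype A] [Fintype B] [DecidableEq A]

lemma isJam_one_kronecker {σ : Matrix B B ℂ} (hσ : IsState σ) :
    IsJam ((1 : Matrix A A ℂ) ⊗ₖ σ) := by
  refine ⟨?_, ?_⟩
  · rw [ptA_kronecker, transpose_one]
    exact PosSemidef.one.kronecker hσ.1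
  · rw [trB_kronecker, hσ.2, one_smul]

lemma IsJam.sum_smul {X : Type*} [Fintype X] {J : X → Matrix (A × B) (A × B) ℂ}
    (hJ : ∀ x, IsJam (J x)) {p : X → ℝ} (hp : ∀ x, 0 ≤ p x) (hp1 : ∑ x, p x = 1) :
    IsJam (∑ x, p x • J x) := by
  refine ⟨?_, ?_⟩
  · simpa only [ptA_sum, ptA_smul] using posSemidef_sum _ fun x _ => (hJ x).1.smul (hp x)
  · simp only [trB_sum, trB_smul, fun x => (hJ x).2, ← Finset.sum_smul, hp1, one_smul]

lemma IsJam.norm_apply_le {J : Matrix (A × B) (A × B) ℂ} (hJ : IsJam J) (q p : A × B) :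
    ‖J q p‖ ≤ Fintype.card A := by
  have h := hJ.1.norm_apply_le_trace (p.1, q.2) (q.1, p.2)
  rwa [trace_ptA, ← trace_trB, hJ.2, trace_one, Complex.natCast_re] at h

end Jamiolkowski

lemma trace_mul_jordan {n : Type*} [Fintype n] (K M J : Matrix n n ℂ) :
    trace (K * jordan M J) = trace (jordan K M * J) := by
  simp only [jordan, Matrix.mul_smul, Matrix.smul_mul, trace_smul, Matrix.mul_add, Matrix.add_mul,
    trace_add, ← Matrix.mul_assoc]
  rw [trace_mul_cycle K J M]

lemma norm_trace_mul_le {n : Type*} [Fintype n] (L J : Matrix n n ℂ) {c : ℝ}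
    (hJ : ∀ q p, ‖J q p‖ ≤ c) : ‖trace (L * J)‖ ≤ c * ∑ p, ∑ q, ‖L p q‖ := by
  rw [Finset.mul_sum]
  refine (norm_sum_le _ _).trans (Finset.sum_le_sum fun p _ => ?_)
  rw [diag_apply, mul_apply, Finset.mul_sum]
  refine (norm_sum_le _ _).trans (Finset.sum_le_sum fun q _ => ?_)
  rw [norm_mul, mul_comm c]
  exact mul_le_mul_of_nonneg_left (hJ q p) (norm_nonneg _)

lemma csInf_le_sum_mul_csInf {X : Type*} [Fintype X] {S : X → Set ℝ} {T : Set ℝ}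
    (hS : ∀ x, (S x).Nonempty) (hT : BddBelow T) {p : X → ℝ} (hp : ∀ x, 0 ≤ p x)
    (hp1 : ∑ x, p x = 1) (hmix : ∀ r : X → ℝ, (∀ x, r x ∈ S x) → ∑ x, p x * r x ∈ T) :
    sInf T ≤ ∑ x, p x * sInf (S x) := by
  refine le_of_forall_pos_le_add fun ε hε => ?_
  choose r hrS hr using fun x => exists_lt_of_csInf_lt (hS x) (lt_add_of_pos_right _ hε)
  calc sInf T ≤ ∑ x, p x * r x := csInf_le hT (hmix r hrS)
    _ ≤ ∑ x, p x * (sInf (S x) + ε) :=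
        Finset.sum_le_sum fun x _ => mul_le_mul_of_nonneg_left (hr x).le (hp x)
    _ = ∑ x, p x * sInf (S x) + ε := by
        simp only [mul_add, Finset.sum_add_distrib, ← Finset.sum_mul, hp1, one_mul]

section TransportCost

variable {A B : Type*} [Fintype A] [Fintype B] [DecidableEq A] [DecidableEq B]

noncomputable def planCost (K : Matrix (A × B) (A × B) ℂ) (ρ : Matrix A A ℂ)
    (J : Matrix (A × B) (A × B) ℂ) : ℝ :=
  (trace (K * jordan (ρ ⊗ₖ (1 : Matrix B B ℂ)) J)).re

def feasibleCosts (K : Matrix (A × B) (A × B) ℂ) (ρ : Matrix A A ℂ) (σ : Matrix B B ℂ) :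
    Set ℝ :=
  {r | ∃ J, IsJam J ∧ trA ((ρ ⊗ₖ (1 : Matrix B B ℂ)) * J) = σ ∧ r = planCost K ρ J}

lemma cost_eq_sInf_feasibleCosts (K : Matrix (A × B) (A × B) ℂ) (ρ : Matrix A A ℂ)
    (σ : Matrix B B ℂ) : cost K ρ σ = sInf (feasibleCosts K ρ σ) :=
  rfl

lemma planCost_sum_smul {X : Type*} [Fintype X] (K : Matrix (A × B) (A × B) ℂ)
    (ρ : Matrix A A ℂ) (p : X → ℝ) (J : X → Matrix (A × B) (A × B) ℂ) :
    planCost K ρ (∑ x, p x • J x) = ∑ x, p x * planCost K ρ (J x) := by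
  simp only [planCost, trace_mul_jordan, Finset.mul_sum, mul_smul_comm, trace_sum, trace_smul,
    Complex.re_sum, Complex.smul_re, smul_eq_mul]

lemma feasibleCosts_nonempty (K : Matrix (A × B) (A × B) ℂ) {ρ : Matrix A A ℂ}
    (hρ : ρ.trace = 1) {σ : Matrix B B ℂ} (hσ : IsState σ) : (feasibleCosts K ρ σ).Nonempty :=
  ⟨_, 1 ⊗ₖ σ, isJam_one_kronecker hσ,
    by rw [← mul_kronecker_mul, mul_one, one_mul, trA_kronecker, hρ, one_smul], rfl⟩

lemma bddBelow_feasibleCosts (K : Matrix (A × B) (A × B) ℂ) (ρ : Matrix A A ℂ)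
    (σ : Matrix B B ℂ) : BddBelow (feasibleCosts K ρ σ) := by
  let L := jordan K (ρ ⊗ₖ (1 : Matrix B B ℂ))
  refine ⟨-(Fintype.card A * ∑ p, ∑ q, ‖L p q‖), ?_⟩
  rintro _ ⟨J, hJ, -, rfl⟩
  have h := norm_trace_mul_le L J hJ.norm_apply_le
  rw [planCost, trace_mul_jordan]
  linarith [neg_abs_le (trace (L * J)).re, Complex.abs_re_le_norm (trace (L * J))]

end TransportCost

theorem stmt12_general {A B X : Type*} [Fintype A] [Fintype B] [Fintype X]
    [DecidableEq A] [DecidableEq B]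
    (K : Matrix (A × B) (A × B) ℂ)
    (ρ : Matrix A A ℂ) (hρ : IsState ρ)
    (p : X → ℝ) (hp : ∀ x, 0 ≤ p x) (hp1 : ∑ x, p x = 1)
    (σ : X → Matrix B B ℂ) (hσ : ∀ x, IsState (σ x)) :
    cost K ρ (∑ x, p x • σ x) ≤ ∑ x, p x * cost K ρ (σ x) := by
  simp only [cost_eq_sInf_feasibleCosts]
  refine csInf_le_sum_mul_csInf (fun x => feasibleCosts_nonempty K hρ.2 (hσ x))
    (bddBelow_feasibleCosts K ρ _) hp hp1 fun r hr => ?_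
  choose J hJ hJσ hr using hr
  refine ⟨∑ x, p x • J x, IsJam.sum_smul hJ hp hp1, ?_, ?_⟩
  · simp only [Finset.mul_sum, mul_smul_comm, trA_sum, trA_smul, hJσ]
  · simp only [planCost_sum_smul, hr]

theorem stmt12 {A B X : Type*} [Fintype A] [Fintype B] [Fintype X]
    [Nonempty A] [Nonempty B] [DecidableEq A] [DecidableEq B]
    (K : Matrix (A × B) (A × B) ℂ) (hK : K.IsHermitian)
    (ρ : Matrix A A ℂ) (hρ : IsState ρ)
    (p : X → ℝ) (hp : ∀ x, 0 ≤ p x) (hp1 : ∑ x, p x = 1)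
    (σ : X → Matrix B B ℂ) (hσ : ∀ x, IsState (σ x)) :
    cost K ρ (∑ x, p x • σ x) ≤ ∑ x, p x * cost K ρ (σ x) :=
  stmt12_general K ρ hρ p hp hp1 σ hσ
end
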